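/- Let X, Y be locally convex Hausdorff real topological vector spaces, U an index set, F_u : X × Y → ℝ ∪ {±∞}, and h : X → ℝ ∪ {+∞} proper convex lsc. Assume (H₃): for every a' ∈ dom h*, inf_{x∈X}(sup_{u} F_u(x,0) − ⟨a',x⟩) = inf_{x∈X}(sup_u (F_u)**(x,0) − ⟨a',x⟩) ≠ +∞, and (H₄): ℱ^# = {(x',s) : ∃(u,μ) ∈ U×Y*, (F_u)*(x',μ) ≤ s} is weak*-closed convex regarding gph h* = {(a',h*(a')) : a' ∈ dom h*}. Then: [∀x, sup_u F_u(x,0) ≥ h(x)] implies [∀a' ∈ dom h*, ∃(ū,μ̄) ∈ U×Y* with (F_ū)*(a',μ̄) ≤ h*(a')]. -/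

import Mathlib

/-
With `s = h*(a')`, hypothesis `(𝔄_h)` gives `a' - s ≤ h ≤ sup_u F_u(·, 0)`, and `(H₃)` transfers this
to `a' - s ≤ sup_u (F_u)**(·, 0)`, a function finite somewhere. That function is the upper envelope
of the affine maps `x'(·) - r`, `(x', r) ∈ ℱ^#`, and `ℱ^#` is closed upwards in `r`. Separating
`(a', s)` from the weak*-closed convex hull of `ℱ^#` by Hahn–Banach (continuous functionals on the
weak* dual are evaluations) produces an affine map bounding that envelope from above and lying
strictly below `a' - s` at some point, a contradiction. So `(a', s)` lies in that hull and on
`gph h*`, hence in `ℱ^#` by `(H₄)`.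
-/

variable {X Y : Type*}
  [AddCommGroup X] [Module ℝ X] [TopologicalSpace X] [IsTopologicalAddGroup X]
  [ContinuousSMul ℝ X] [LocallyConvexSpace ℝ X] [T2Space X]
  [AddCommGroup Y] [Module ℝ Y] [TopologicalSpace Y] [IsTopologicalAddGroup Y]
  [ContinuousSMul ℝ Y] [LocallyConvexSpace ℝ Y] [T2Space Y]

/-- Fenchel conjugate of `F : X × Y → ℝ̄`, with first dual variable in the
weak* dual of `X`. -/
noncomputable def wConj (F : X → Y → EReal) (x' : WeakDual ℝ X) (y' : Y →L[ℝ] ℝ) : EReal :=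
  ⨆ p : X × Y, (((x' p.1 + y' p.2 : ℝ) : EReal) - F p.1 p.2)

/-- Fenchel biconjugate of `F : X × Y → ℝ̄` on `X × Y`. -/
noncomputable def wBiconj (F : X → Y → EReal) (x : X) (y : Y) : EReal :=
  ⨆ w : WeakDual ℝ X × (Y →L[ℝ] ℝ), (((w.1 x + w.2 y : ℝ) : EReal) - wConj F w.1 w.2)

/-- Fenchel conjugate of `h : X → ℝ ∪ {+∞}` on the weak* dual of `X`. -/
noncomputable def hConj (h : X → EReal) (a' : WeakDual ℝ X) : EReal :=
  ⨆ x : X, (((a' x : ℝ) : EReal) - h x)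

namespace EReal

theorem coe_sub_le_comm {r s : ℝ} {v : EReal} :
    (r : EReal) - v ≤ s ↔ ((r - s : ℝ) : EReal) ≤ v := by
  rw [sub_le_iff_le_add (.inr (coe_ne_top s)) (.inr (coe_ne_bot s)), coe_sub,
    sub_le_iff_le_add (.inl (coe_ne_bot s)) (.inl (coe_ne_top s)), add_comm]

theorem le_iInf_sub_coe_iff {ι : Sort*} {r : ι → ℝ} {f : ι → EReal} {s : ℝ} :
    ((-s : ℝ) : EReal) ≤ ⨅ i, (f i - r i) ↔ ∀ i, ((r i - s : ℝ) : EReal) ≤ f i := by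
  refine le_iInf_iff.trans (forall_congr' fun i => ?_)
  rw [le_sub_iff_add_le (.inl (coe_ne_bot _)) (.inl (coe_ne_top _)), ← coe_add, neg_add_eq_sub]

theorem iSup_coe_sub_of_le (a : ℝ) (c : EReal) :
    ⨆ (t : ℝ) (_ : c ≤ t), ((a - t : ℝ) : EReal) = a - c := by
  refine le_antisymm (iSup₂_le fun t ht => (coe_sub a t).trans_le (sub_le_sub le_rfl ht)) ?_
  induction c using EReal.rec with
  | bot =>
    simp only [bot_le, iSup_pos, coe_sub_bot, top_le_iff, eq_top_iff_forall_lt]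
    exact fun y => (EReal.coe_lt_coe_iff.2 (by linarith : y < a - (a - y - 1))).trans_le
      (le_iSup (fun t : ℝ => ((a - t : ℝ) : EReal)) _)
  | top => simp
  | coe c =>
    exact (coe_sub a c).symm.trans_le
      (le_iSup₂ (f := fun (t : ℝ) (_ : (c : EReal) ≤ t) => ((a - t : ℝ) : EReal)) c le_rfl)

end EReal

section WeakDual

variable {E : Type*} [AddCommGroup E] [Module ℝ E] [TopologicalSpace E]

instance WeakDual.instLocallyConvexSpace : LocallyConvexSpace ℝ (WeakDual ℝ E) :=
  WeakBilin.locallyConvexSpace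

theorem WeakDual.exists_apply_prod_eq (f : StrongDual ℝ (WeakDual ℝ E × ℝ)) :
    ∃ x : E, ∀ z : WeakDual ℝ E × ℝ, f z = z.1 x + z.2 * f (0, 1) := by
  obtain ⟨x, hx⟩ := LinearMap.dualEmbedding_surjective (topDualPairing ℝ E)
    (f.comp (ContinuousLinearMap.inl ℝ (WeakDual ℝ E) ℝ))
  refine ⟨x, fun z => ?_⟩
  have hz : z = (z.1, 0) + z.2 • ((0 : WeakDual ℝ E), (1 : ℝ)) := by ext <;> simp
  have h1 : f (z.1, 0) = z.1 x := (DFunLike.congr_fun hx z.1).symm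
  conv_lhs => rw [hz, map_add, map_smul, smul_eq_mul, h1]

noncomputable def affineEnvelope (S : Set (WeakDual ℝ E × ℝ)) (x : E) : EReal :=
  ⨆ z ∈ S, ((z.1 x - z.2 : ℝ) : EReal)

theorem affineEnvelope_le_coe_iff {S : Set (WeakDual ℝ E × ℝ)} {x : E} {M : ℝ} :
    affineEnvelope S x ≤ M ↔ ∀ z ∈ S, z.1 x - z.2 ≤ M := by
  simp only [affineEnvelope, iSup₂_le_iff, EReal.coe_le_coe_iff]

theorem affineEnvelope_setOf_exists_le {ι : Type*} (g : ι → WeakDual ℝ E → EReal) (x : E) :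
    affineEnvelope {z | ∃ i, g i z.1 ≤ z.2} x =
      ⨆ (i) (x' : WeakDual ℝ E), (x' x : EReal) - g i x' := by
  simp only [affineEnvelope, Set.mem_ofPred_eq, iSup_exists, iSup_prod]
  calc _ = ⨆ (x' : WeakDual ℝ E) (i : ι) (t : ℝ) (_ : g i x' ≤ t), ((x' x - t : ℝ) : EReal) :=
        iSup_congr fun x' => iSup_comm
    _ = _ := by simp_rw [EReal.iSup_coe_sub_of_le]; exact iSup_comm

theorem nonpos_of_forall_add_mul_lt {S : Set (WeakDual ℝ E × ℝ)}
    (hS : ∀ z ∈ S, ∀ t : ℝ, z.2 ≤ t → (z.1, t) ∈ S) (hne : S.Nonempty) {x₀ : E} {c₀ c : ℝ}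
    (hsep : ∀ z ∈ S, z.1 x₀ + z.2 * c₀ < c) : c₀ ≤ 0 := by
  obtain ⟨z, hz⟩ := hne
  by_contra! hc₀
  set t := max z.2 ((c - z.1 x₀) / c₀)
  have ht : c - z.1 x₀ ≤ t * c₀ := (div_le_iff₀ hc₀).1 (le_max_right _ _)
  linarith [hsep _ (hS z hz t (le_max_left _ _))]

theorem exists_affineEnvelope_lt {S : Set (WeakDual ℝ E × ℝ)} {a' : WeakDual ℝ E} {s : ℝ}
    {x₀ xb : E} {c₀ c M : ℝ} (hc₀ : c₀ ≤ 0) (hsep : ∀ z ∈ S, z.1 x₀ + z.2 * c₀ < c)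
    (hc : c < a' x₀ + s * c₀) (hM : ∀ z ∈ S, z.1 xb - z.2 ≤ M) :
    ∃ x, affineEnvelope S x < ((a' x - s : ℝ) : EReal) := by
  obtain ⟨n, hn⟩ := exists_nat_gt ((M - a' xb + s) / (a' x₀ + s * c₀ - c))
  have hn : M - a' xb + s < n * (a' x₀ + s * c₀ - c) := (div_lt_iff₀ (by linarith)).1 hn
  have hn0 : (0 : ℝ) ≤ n := n.cast_nonneg
  have ht : 0 < 1 - n * c₀ := by nlinarith
  set x := (1 - n * c₀)⁻¹ • ((n : ℝ) • x₀ + xb)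
  -- `(x, -1)` is `n • (x₀, c₀) + (xb, -1)` rescaled; adding `(xb, -1)` makes the last coordinate
  -- negative even when `c₀ = 0`.
  have hx : ∀ (φ : WeakDual ℝ E) (r : ℝ),
      φ x - r = (1 - n * c₀)⁻¹ * (n * (φ x₀ + r * c₀) + (φ xb - r)) := by
    intro φ r
    simp only [x, map_smul, map_add, smul_eq_mul]
    field_simp
    ring
  refine ⟨x, lt_of_le_of_lt (b := (((1 - n * c₀)⁻¹ * (n * c + M) : ℝ) : EReal)) ?_ ?_⟩
  · refine affineEnvelope_le_coe_iff.2 fun z hz => ?_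
    rw [hx]
    refine mul_le_mul_of_nonneg_left ?_ (inv_nonneg.2 ht.le)
    linarith [mul_le_mul_of_nonneg_left (hsep z hz).le hn0, hM z hz]
  · rw [EReal.coe_lt_coe_iff, hx]
    exact mul_lt_mul_of_pos_left (by linarith) (inv_pos.2 ht)

theorem mem_closure_convexHull_of_le_affineEnvelope {S : Set (WeakDual ℝ E × ℝ)}
    (hS : ∀ z ∈ S, ∀ t : ℝ, z.2 ≤ t → (z.1, t) ∈ S) {a' : WeakDual ℝ E} {s : ℝ}
    (hle : ∀ x, ((a' x - s : ℝ) : EReal) ≤ affineEnvelope S x)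
    (hfin : ∃ x, affineEnvelope S x ≠ ⊤) :
    (a', s) ∈ closure (convexHull ℝ S) := by
  obtain ⟨xb, hxb⟩ := hfin
  have hM : ∀ z ∈ S, z.1 xb - z.2 ≤ (affineEnvelope S xb).toReal :=
    affineEnvelope_le_coe_iff.1 (EReal.le_coe_toReal hxb)
  have hne : S.Nonempty := by
    by_contra! hempty
    have h := hle xb
    simp only [affineEnvelope, hempty, Set.mem_empty_iff_false, iSup_false, iSup_bot,
      le_bot_iff] at h
    exact EReal.coe_ne_bot _ h
  by_contra hmem
  obtain ⟨f, c, hsep, hc⟩ := geometric_hahn_banach_closed_point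
    (convex_convexHull ℝ S).closure isClosed_closure hmem
  obtain ⟨x₀, hf⟩ := WeakDual.exists_apply_prod_eq f
  have hsep' : ∀ z ∈ S, z.1 x₀ + z.2 * f (0, 1) < c := fun z hz =>
    hf z ▸ hsep z (subset_closure (subset_convexHull ℝ S hz))
  obtain ⟨x, hx⟩ := exists_affineEnvelope_lt (nonpos_of_forall_add_mul_lt hS hne hsep')
    hsep' (hf (a', s) ▸ hc) hM
  exact (hle x).not_gt hx

end WeakDual

section Conjugates

variable {E F : Type*} [AddCommGroup E] [Module ℝ E] [TopologicalSpace E]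
  [AddCommGroup F] [Module ℝ F] [TopologicalSpace F]

theorem affineEnvelope_epigraphs_wConj {U : Type*} (G : U → E → F → EReal) (x : E) :
    affineEnvelope {z : WeakDual ℝ E × ℝ | ∃ (u : U) (μ : F →L[ℝ] ℝ), wConj (G u) z.1 μ ≤ z.2} x =
      ⨆ u, wBiconj (G u) x 0 := by
  have h := affineEnvelope_setOf_exists_le
    (fun (p : U × (F →L[ℝ] ℝ)) (x' : WeakDual ℝ E) => wConj (G p.1) x' p.2) x
  simp only [Prod.exists] at h
  rw [h, iSup_prod]
  refine iSup_congr fun u => ?_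
  simp only [wBiconj, map_zero, add_zero, iSup_prod]
  exact iSup_comm

theorem hConj_ne_bot {h : E → EReal} (hproper : ∃ x, h x ≠ ⊤) (a' : WeakDual ℝ E) :
    hConj h a' ≠ ⊥ := by
  obtain ⟨x, hx⟩ := hproper
  refine ne_bot_of_le_ne_bot ?_ (le_iSup (fun x => ((a' x : ℝ) : EReal) - h x) x)
  generalize h x = v at hx ⊢
  induction v using EReal.rec <;> simp_all [← EReal.coe_sub]

theorem coe_sub_le_of_hConj_le {h : E → EReal} {a' : WeakDual ℝ E} {s : ℝ}
    (hs : hConj h a' ≤ s) (x : E) : ((a' x - s : ℝ) : EReal) ≤ h x :=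
  EReal.coe_sub_le_comm.1 ((le_iSup (fun x => ((a' x : ℝ) : EReal) - h x) x).trans hs)

end Conjugates

theorem stmt_16_general {U : Type*} (F : U → X → Y → EReal) (h : X → EReal)
    (hproper : ∃ x, h x ≠ ⊤)
    (H3 : ∀ a' : WeakDual ℝ X, hConj h a' ≠ ⊤ →
      (⨅ x : X, ((⨆ u : U, F u x 0) - ((a' x : ℝ) : EReal))) =
          (⨅ x : X, ((⨆ u : U, wBiconj (F u) x 0) - ((a' x : ℝ) : EReal))) ∧
        (⨅ x : X, ((⨆ u : U, F u x 0) - ((a' x : ℝ) : EReal))) ≠ ⊤)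
    (H4 : closure (convexHull ℝ
          {z : WeakDual ℝ X × ℝ | ∃ (u : U) (μ : Y →L[ℝ] ℝ),
            wConj (F u) z.1 μ ≤ (z.2 : EReal)}) ∩
          {z : WeakDual ℝ X × ℝ | hConj h z.1 = (z.2 : EReal)} =
        {z : WeakDual ℝ X × ℝ | ∃ (u : U) (μ : Y →L[ℝ] ℝ),
            wConj (F u) z.1 μ ≤ (z.2 : EReal)} ∩
          {z : WeakDual ℝ X × ℝ | hConj h z.1 = (z.2 : EReal)})
    (hA : ∀ x : X, h x ≤ ⨆ u : U, F u x 0) :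
    ∀ a' : WeakDual ℝ X, hConj h a' ≠ ⊤ →
      ∃ (u : U) (μ : Y →L[ℝ] ℝ), wConj (F u) a' μ ≤ hConj h a' := by
  intro a' ha'
  set S := {z : WeakDual ℝ X × ℝ | ∃ (u : U) (μ : Y →L[ℝ] ℝ), wConj (F u) z.1 μ ≤ (z.2 : EReal)}
  obtain ⟨s, hs⟩ : ∃ s : ℝ, hConj h a' = s :=
    ⟨_, (EReal.coe_toReal ha' (hConj_ne_bot hproper a')).symm⟩
  obtain ⟨hbiconj, hfin⟩ := H3 a' ha'
  have hle : ∀ x, ((a' x - s : ℝ) : EReal) ≤ affineEnvelope S x := by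
    intro x
    rw [affineEnvelope_epigraphs_wConj]
    refine (EReal.le_iInf_sub_coe_iff (r := fun x => a' x)
      (f := fun x => ⨆ u, wBiconj (F u) x 0)).1 ?_ x
    rw [← hbiconj]
    exact EReal.le_iInf_sub_coe_iff.2 fun x => (coe_sub_le_of_hConj_le hs.le x).trans (hA x)
  have hfin' : ∃ x, affineEnvelope S x ≠ ⊤ := by
    rw [hbiconj, Ne, iInf_eq_top, not_forall] at hfin
    obtain ⟨x, hx⟩ := hfin
    refine ⟨x, fun htop => hx ?_⟩
    rw [← affineEnvelope_epigraphs_wConj, htop, EReal.top_sub_coe]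
  have hupper : ∀ z ∈ S, ∀ t : ℝ, z.2 ≤ t → (z.1, t) ∈ S := fun _ ⟨u, μ, hz⟩ t ht =>
    ⟨u, μ, hz.trans (EReal.coe_le_coe_iff.2 ht)⟩
  have hmem := mem_closure_convexHull_of_le_affineEnvelope hupper hle hfin'
  obtain ⟨⟨u, μ, hu⟩, -⟩ : (a', s) ∈ S ∩ {z | hConj h z.1 = z.2} := H4 ▸ ⟨hmem, hs⟩
  exact ⟨u, μ, hs ▸ hu⟩

/-- Theorem 4.1: under `(H₃)` and `(H₄)` the robust `S^h_{F_u}`-procedure is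
valid, i.e. `(𝔄_h) ⟹ (𝔅_h)`. -/
theorem stmt_16 {U : Type*} (F : U → X → Y → EReal) (h : X → EReal)
    (hbot : ∀ x, h x ≠ ⊥) (hproper : ∃ x, h x ≠ ⊤)
    (hconvex : Convex ℝ {p : X × ℝ | h p.1 ≤ (p.2 : EReal)})
    (hlsc : LowerSemicontinuous h)
    (H3 : ∀ a' : WeakDual ℝ X, hConj h a' ≠ ⊤ →
      (⨅ x : X, ((⨆ u : U, F u x 0) - ((a' x : ℝ) : EReal))) =
          (⨅ x : X, ((⨆ u : U, wBiconj (F u) x 0) - ((a' x : ℝ) : EReal))) ∧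
        (⨅ x : X, ((⨆ u : U, F u x 0) - ((a' x : ℝ) : EReal))) ≠ ⊤)
    (H4 : closure (convexHull ℝ
          {z : WeakDual ℝ X × ℝ | ∃ (u : U) (μ : Y →L[ℝ] ℝ),
            wConj (F u) z.1 μ ≤ (z.2 : EReal)}) ∩
          {z : WeakDual ℝ X × ℝ | hConj h z.1 = (z.2 : EReal)} =
        {z : WeakDual ℝ X × ℝ | ∃ (u : U) (μ : Y →L[ℝ] ℝ),
            wConj (F u) z.1 μ ≤ (z.2 : EReal)} ∩
          {z : WeakDual ℝ X × ℝ | hConj h z.1 = (z.2 : EReal)})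
    (hA : ∀ x : X, h x ≤ ⨆ u : U, F u x 0) :
    ∀ a' : WeakDual ℝ X, hConj h a' ≠ ⊤ →
      ∃ (u : U) (μ : Y →L[ℝ] ℝ), wConj (F u) a' μ ≤ hConj h a' :=
  stmt_16_general F h hproper H3 H4 hA
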